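/- For n ≥ 0 let σ_n be the two-dimensional substitution on the alphabet {1,2} with base rule 1 ↦ {[(0,0),1]}, 2 ↦ {[(0,0),2]} and concatenation rules: (a,a,(1,0)) ↦ (1,0) and (a,a,(0,1)) ↦ (0,1) for a ∈ {1,2}; (1,2,(1,0)) ↦ (n+1,0); (2,1,(1,0)) ↦ (1−n,0); (1,2,(0,1)) ↦ (n,1); (2,1,(0,1)) ↦ (−n,1). Then σ_n is domino-complete and consistent, and every C_{σ_n}-path γ from a cell [(0,0),t] to a cell [(x,y),t'] satisfies ω_{σ_n}(γ) = (x,y) − v_t + v_{t'}, where v_1 = (0,0) and v_2 = (n,0). -/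

import Mathlib

open scoped Classical

/-- A combinatorial substitution on alphabet `A` with vectors in `V`:
a base rule sending each letter to a pattern, together with a deterministic
finite set of concatenation rules.  `rule t t' u = some v` encodes the
concatenation rule `(t, t', u) ↦ v`. -/
structure Subst (A : Type*) (V : Type*) [AddCommGroup V] where
  /-- the base rule -/
  base : A → Finset (V × A)
  /-- the image of a letter is a pattern: its cells have distinct vectors -/
  basePat : ∀ t : A, ∀ c ∈ base t, ∀ c' ∈ base t, c.1 = c'.1 → c = c'
  /-- the concatenation rules, as a partial function -/
  rule : A → A → V → Option V
  /-- there are finitely many concatenation rules -/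
  finiteRules : {u : V | ∃ t t', rule t t' u ≠ none}.Finite
  /-- determinism: no two rules with left-hand sides `(t,t',u)` and `(t,t',-u)` -/
  det : ∀ t t' u, (rule t t' u).isSome → (rule t t' (-u)).isSome → u = -u

/-- A pattern is a finite set of cells with pairwise distinct vectors. -/
def IsPattern {V A : Type*} (P : Finset (V × A)) : Prop :=
  ∀ c ∈ P, ∀ c' ∈ P, c.1 = c'.1 → c = c'

namespace Subst

variable {A V : Type*} [AddCommGroup V]

/-- `σ_rule(c, c')`: the relative position of the images of the two cells
`c`, `c'`, when some concatenation rule applies to them. -/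
def ruleVec (σ : Subst A V) (c c' : V × A) : Option V :=
  match σ.rule c.2 c'.2 (c'.1 - c.1) with
  | some v => some v
  | none => (σ.rule c'.2 c.2 (c.1 - c'.1)).map (fun v => -v)

/-- The image vector `ω_σ(γ)` of a path `γ`. -/
def omega (σ : Subst A V) (γ : List (V × A)) : V :=
  ((γ.zip γ.tail).map (fun p => (σ.ruleVec p.1 p.2).getD 0)).sum

/-- A `C_σ`-path: a nonempty sequence of cells in which any two consecutive
cells form a translated copy of a starting pattern of `σ`, and any two cells
with the same vector are equal. -/
def IsPath (σ : Subst A V) (γ : List (V × A)) : Prop :=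
  γ ≠ [] ∧ γ.Chain' (fun c c' => (σ.ruleVec c c').isSome) ∧
    ∀ c ∈ γ, ∀ c' ∈ γ, c.1 = c'.1 → c = c'

/-- A `C_σ`-path of the pattern `P`. -/
def IsPathOf (σ : Subst A V) (P : Finset (V × A)) (γ : List (V × A)) : Prop :=
  σ.IsPath γ ∧ ∀ c ∈ γ, c ∈ P

/-- A `C_σ`-loop of the pattern `P`. -/
def IsLoopOf (σ : Subst A V) (P : Finset (V × A)) (γ : List (V × A)) : Prop :=
  σ.IsPathOf P γ ∧ γ.head? = γ.getLast?

/-- `P` is `C_σ`-covered: any two of its cells are joined by a `C_σ`-path of `P`. -/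
def Covered (σ : Subst A V) (P : Finset (V × A)) : Prop :=
  ∀ c ∈ P, ∀ c' ∈ P,
    ∃ γ, σ.IsPathOf P γ ∧ γ.head? = some c ∧ γ.getLast? = some c'

/-- `σ` is consistent on `P`: any two `C_σ`-paths of `P` with the same first
and last cells have the same image vector. -/
def ConsistentOn (σ : Subst A V) (P : Finset (V × A)) : Prop :=
  ∀ γ γ' : List (V × A), σ.IsPathOf P γ → σ.IsPathOf P γ' →
    γ.head? = γ'.head? → γ.getLast? = γ'.getLast? → σ.omega γ = σ.omega γ'

/-- `σ` is consistent: it is consistent on every `C_σ`-covered pattern. -/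
def Consistent (σ : Subst A V) : Prop :=
  ∀ P : Finset (V × A), IsPattern P → σ.Covered P → σ.ConsistentOn P

/-- The support of the image of a letter. -/
noncomputable def supp (σ : Subst A V) (t : A) : Finset V :=
  (σ.base t).image Prod.fst

/-- `σ` is non-overlapping on `P`: the images of two distinct cells of `P`
joined by a `C_σ`-path of `P` have disjoint supports. -/
def NonOverlappingOn (σ : Subst A V) (P : Finset (V × A)) : Prop :=
  ∀ c ∈ P, ∀ c' ∈ P, c ≠ c' → ∀ γ, σ.IsPathOf P γ →
    γ.head? = some c → γ.getLast? = some c' →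
    ∀ b ∈ σ.supp c'.2, σ.omega γ + b ∉ σ.supp c.2

/-- `σ` is non-overlapping: it is non-overlapping on every `C_σ`-covered pattern. -/
def NonOverlapping (σ : Subst A V) : Prop :=
  ∀ P : Finset (V × A), IsPattern P → σ.Covered P → σ.NonOverlappingOn P

end Subst

/-- A domino: a two-cell two-dimensional pattern whose vectors differ by
`(1,0)`, `(-1,0)`, `(0,1)` or `(0,-1)`. -/
def IsDomino {A : Type*} (P : Finset ((ℤ × ℤ) × A)) : Prop :=
  ∃ (v u : ℤ × ℤ) (t t' : A), (u = (1, 0) ∨ u = (0, 1)) ∧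
    P = {(v, t), (v + u, t')}

/-- A `2 × 2` pattern: a pattern whose support is a translate of
`{0,1} × {0,1}`. -/
def IsTwoByTwo {A : Type*} (P : Finset ((ℤ × ℤ) × A)) : Prop :=
  IsPattern P ∧ ∃ w : ℤ × ℤ,
    P.image Prod.fst = ({w, w + (1, 0), w + (0, 1), w + (1, 1)} : Finset (ℤ × ℤ))

/-- A two-dimensional substitution is domino-complete when its starting
patterns are exactly all the dominoes. -/
def Subst.DominoComplete {A : Type*} (σ : Subst A (ℤ × ℤ)) : Prop :=
  (∀ (t t' : A) (u : ℤ × ℤ), σ.rule t t' u ≠ none →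
      u = (1, 0) ∨ u = (-1, 0) ∨ u = (0, 1) ∨ u = (0, -1)) ∧
  ∀ t t' : A,
    (σ.ruleVec ((0, 0), t) ((1, 0), t')).isSome ∧
    (σ.ruleVec ((0, 0), t) ((0, 1), t')).isSome

/-- The two-letter alphabet `{1, 2}`. -/
inductive B : Type where
  | b1 : B
  | b2 : B
deriving DecidableEq

instance instFintypeB : Fintype B :=
  ⟨{B.b1, B.b2}, fun x => by cases x <;> simp⟩

open B

/-- The vectors `v_1 = (0,0)` and `v_2 = (n,0)`. -/
def vB (n : ℕ) : B → ℤ × ℤ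
  | b1 => (0, 0)
  | b2 => ((n : ℤ), 0)

/-- The horizontal rules of `σ_n`. -/
def hruleN (n : ℕ) : B → B → Option (ℤ × ℤ)
  | b1, b1 => some (1, 0)
  | b2, b2 => some (1, 0)
  | b1, b2 => some ((n : ℤ) + 1, 0)
  | b2, b1 => some (1 - (n : ℤ), 0)

/-- The vertical rules of `σ_n`. -/
def vruleN (n : ℕ) : B → B → Option (ℤ × ℤ)
  | b1, b1 => some (0, 1)
  | b2, b2 => some (0, 1)
  | b1, b2 => some ((n : ℤ), 1)
  | b2, b1 => some (-(n : ℤ), 1)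

/-- The substitution `σ_n` of Example `overlapfar`:
`1 ↦ {[(0,0),1]}`, `2 ↦ {[(0,0),2]}`, with rules
`(a,a,(1,0)) ↦ (1,0)`, `(a,a,(0,1)) ↦ (0,1)`, `(1,2,(1,0)) ↦ (n+1,0)`,
`(2,1,(1,0)) ↦ (1-n,0)`, `(1,2,(0,1)) ↦ (n,1)`, `(2,1,(0,1)) ↦ (-n,1)`. -/
noncomputable def sigmaN (n : ℕ) : Subst B (ℤ × ℤ) where
  base t := {((0, 0), t)}
  basePat := by
    intro t c hc c' hc' _
    rw [Finset.mem_singleton] at hc hc'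
    rw [hc, hc']
  rule t t' u :=
    if u = ((1 : ℤ), (0 : ℤ)) then hruleN n t t'
    else if u = ((0 : ℤ), (1 : ℤ)) then vruleN n t t' else none
  finiteRules := by
    apply Set.Finite.subset
      ((Set.finite_singleton (((0 : ℤ), (1 : ℤ)) : ℤ × ℤ)).insert
        (((1 : ℤ), (0 : ℤ)) : ℤ × ℤ))
    rintro u ⟨t, t', h⟩
    try simp only at h
    split_ifs at h with h1 h2
    · exact Set.mem_insert_iff.2 (Or.inl h1)
    · exact Set.mem_insert_iff.2 (Or.inr h2)
    · exact absurd rfl h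
  det := by
    intro t t' u h1 h2
    exfalso
    try simp only at h1 h2
    have hu : u = ((1 : ℤ), (0 : ℤ)) ∨ u = ((0 : ℤ), (1 : ℤ)) := by
      split_ifs at h1 with hA hB
      · exact Or.inl hA
      · exact Or.inr hB
      · simp at h1
    have hnu : -u = ((1 : ℤ), (0 : ℤ)) ∨ -u = ((0 : ℤ), (1 : ℤ)) := by
      split_ifs at h2 with hC hD
      · exact Or.inl hC
      · exact Or.inr hD
      · simp at h2
    rcases hu with rfl | rfl <;> rcases hnu with h | h <;> revert h <;> decide

/-!
A rule `(t, t', u) ↦ v` of `σ_n` always satisfies `v = u - v_t + v_{t'}`: each concatenation step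
moves the potential `φ[u, t] = u + v_t` by exactly the relative position of the two images.
Hence the image vector of any `C_{σ_n}`-path telescopes to `φ(last cell) - φ(first cell)`, which
depends only on the endpoints; this gives both consistency and the explicit formula.
-/

namespace Subst

variable {A V : Type*} [AddCommGroup V] (σ : Subst A V)

lemma omega_singleton (c : V × A) : σ.omega [c] = 0 := by
  simp [omega]

lemma omega_cons_cons (c c' : V × A) (l : List (V × A)) :
    σ.omega (c :: c' :: l) = (σ.ruleVec c c').getD 0 + σ.omega (c' :: l) := by
  simp [omega]

lemma ruleVec_eq_of_rule_eq (w : A → V)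
    (hw : ∀ t t' u v, σ.rule t t' u = some v → v = u + w t' - w t)
    {c c' : V × A} {v : V} (h : σ.ruleVec c c' = some v) :
    v = (c'.1 + w c'.2) - (c.1 + w c.2) := by
  unfold ruleVec at h
  split at h
  · next v' hv' =>
    rw [← Option.some_inj.1 h, hw _ _ _ _ hv']
    abel
  · obtain ⟨v', hv', rfl⟩ := Option.map_eq_some_iff.1 h
    rw [hw _ _ _ _ hv']
    abel

variable {σ}

theorem omega_eq_sub_of_ruleVec_eq (φ : V × A → V)
    (hφ : ∀ c c' v, σ.ruleVec c c' = some v → v = φ c' - φ c) :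
    ∀ {γ : List (V × A)}, γ.IsChain (fun c c' => (σ.ruleVec c c').isSome) →
      ∀ {c c' : V × A}, γ.head? = some c → γ.getLast? = some c' →
        σ.omega γ = φ c' - φ c
  | [], _, _, _, hc, _ => by simp at hc
  | [a], _, c, c', hc, hc' => by
    obtain rfl : a = c := by simpa using hc
    obtain rfl : a = c' := by simpa using hc'
    simp [omega_singleton]
  | a :: b :: l, hγ, c, c', hc, hc' => by
    obtain rfl : a = c := by simpa using hc
    rw [List.isChain_cons_cons] at hγ
    obtain ⟨v, hv⟩ := Option.isSome_iff_exists.1 hγ.1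
    rw [List.getLast?_cons_cons] at hc'
    rw [omega_cons_cons, hv, Option.getD_some, hφ _ _ _ hv,
      omega_eq_sub_of_ruleVec_eq φ hφ hγ.2 rfl hc']
    abel

theorem consistentOn_of_ruleVec_eq (φ : V × A → V)
    (hφ : ∀ c c' v, σ.ruleVec c c' = some v → v = φ c' - φ c) (P : Finset (V × A)) :
    σ.ConsistentOn P := by
  rintro γ γ' ⟨⟨hne, hγ, -⟩, -⟩ ⟨⟨-, hγ', -⟩, -⟩ hhead hlast
  obtain ⟨c, hc⟩ := Option.ne_none_iff_exists'.1 (mt List.head?_eq_none_iff.1 hne)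
  obtain ⟨c', hc'⟩ := Option.ne_none_iff_exists'.1 (mt List.getLast?_eq_none_iff.1 hne)
  rw [omega_eq_sub_of_ruleVec_eq φ hφ hγ hc hc',
    omega_eq_sub_of_ruleVec_eq φ hφ hγ' (hhead ▸ hc) (hlast ▸ hc')]

end Subst

lemma sigmaN_rule_eq {n : ℕ} {t t' : B} {u v : ℤ × ℤ} (h : (sigmaN n).rule t t' u = some v) :
    v = u + vB n t' - vB n t := by
  simp only [sigmaN] at h
  split_ifs at h with h₁ h₂ <;> subst_vars <;>
    cases t <;> cases t' <;> simp only [hruleN, vruleN, Option.some_inj] at h <;> subst h <;>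
      ext <;> simp [vB, add_comm]

lemma sigmaN_ruleVec_eq {n : ℕ} {c c' : (ℤ × ℤ) × B} {v : ℤ × ℤ}
    (h : (sigmaN n).ruleVec c c' = some v) :
    v = (c'.1 + vB n c'.2) - (c.1 + vB n c.2) :=
  (sigmaN n).ruleVec_eq_of_rule_eq (vB n) (fun _ _ _ _ => sigmaN_rule_eq) h

lemma sigmaN_dominoComplete (n : ℕ) : (sigmaN n).DominoComplete := by
  refine ⟨fun t t' u h => ?_, fun t t' => ?_⟩
  · simp only [sigmaN] at h
    split_ifs at h with h₁ h₂
    · exact Or.inl h₁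
    · exact Or.inr (Or.inr (Or.inl h₂))
    · exact absurd rfl h
  · cases t <;> cases t' <;> simp [Subst.ruleVec, sigmaN, hruleN, vruleN]

/-- Example `overlapfar`.  For every `n ≥ 0`, the
substitution `σ_n` is domino-complete and consistent, and every
`C_{σ_n}`-path from a cell `[(0,0), t]` to a cell `[(x,y), t']` has image
vector `(x, y) - v_t + v_{t'}`, where `v_1 = (0,0)` and `v_2 = (n,0)`. -/
theorem sigmaN_dominoComplete_consistent (n : ℕ) :
    (sigmaN n).DominoComplete ∧ (sigmaN n).Consistent ∧
      ∀ (t t' : B) (x y : ℤ) (γ : List ((ℤ × ℤ) × B)),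
        (sigmaN n).IsPath γ →
        γ.head? = some ((((0 : ℤ), (0 : ℤ)) : ℤ × ℤ), t) →
        γ.getLast? = some ((((x, y) : ℤ × ℤ)), t') →
        (sigmaN n).omega γ = ((x, y) : ℤ × ℤ) - vB n t + vB n t' := by
  refine ⟨sigmaN_dominoComplete n,
    fun P _ _ => Subst.consistentOn_of_ruleVec_eq _ (fun _ _ _ => sigmaN_ruleVec_eq) P, ?_⟩
  rintro t t' x y γ ⟨-, hγ, -⟩ hhead hlast
  rw [Subst.omega_eq_sub_of_ruleVec_eq _ (fun _ _ _ => sigmaN_ruleVec_eq) hγ hhead hlast,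
    Prod.mk_zero_zero, zero_add]
  abel
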